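/- arXiv:1606.05305 — 4 statements merged into one kernel-verified Lean document; each statement's English description precedes it below -/
import Mathlib

section
/- Let L be a finite-dimensional Lie algebra over ℂ and let (e,h,f) be an sl₂-triple in L. For j ∈ ℤ set L_j = {x ∈ L : ⁅h,x⁆ = (j:ℂ) • x}. Then for every integer j ≤ -1, any x ∈ L_j with ⁅e,x⁆ = 0 satisfies x = 0 (ad e is injective on L_j), and for every integer j ≥ -1 and every y ∈ L_{j+2} there exists x ∈ L_j with ⁅e,x⁆ = y (ad e maps L_j onto L_{j+2}). In other words, the Dynkin grading determined by h is a good ℤ-grading for e. -/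
open Set Module

lemma key {V : Type*} [AddCommGroup V] [Module ℂ V] [Module.Finite ℂ V]
    (A B C : V →ₗ[ℂ] V)
    (h1 : ∀ v, C (A v) - A (C v) = (2:ℂ) • A v)
    (h2 : ∀ v, A (B v) - B (A v) = C v)
    (μ : ℂ) (hμ : ∀ k : ℕ, μ + k ≠ 0)
    (y : V) (hy : C y = μ • y) (hAB : A (B y) = 0) : y = 0 := by
  by_contra hy0
  have hC : ∀ k : ℕ, C ((A ^ k) y) = (μ + 2 * k) • (A ^ k) y := by
    intro k
    induction k with
    | zero => simpa using hy
    | succ k ih =>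
      have h1' := h1 ((A ^ k) y)
      rw [sub_eq_iff_eq_add] at h1'
      rw [pow_succ', Module.End.mul_apply, h1', ih, map_smul]
      push_cast
      module
  have hB : ∀ k : ℕ, B ((A ^ (k + 1)) y) = (-((k + 1 : ℂ) * (μ + k))) • (A ^ k) y := by
    intro k
    induction k with
    | zero =>
      have h2' := h2 y
      rw [hAB, zero_sub, neg_eq_iff_eq_neg] at h2'
      simp only [zero_add, pow_one, pow_zero, Module.End.one_apply, Nat.cast_zero]
      rw [h2', hy, ← neg_smul]
      ring_nf
    | succ k ih =>
      have h2' := h2 ((A ^ (k + 1)) y)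
      have e1 : B (A ((A ^ (k + 1)) y)) = A (B ((A ^ (k + 1)) y)) - C ((A ^ (k + 1)) y) := by
        rw [← h2']; abel
      rw [pow_succ' A (k + 1), Module.End.mul_apply, e1, ih, map_smul, hC (k + 1),
        pow_succ' A k, Module.End.mul_apply]
      push_cast
      module
  have hex : ∃ n, (A ^ n) y = 0 := by
    by_contra! contra
    have hs : (Set.range fun (n : ℕ) ↦ μ + 2 * n).Infinite := by
      rw [infinite_range_iff (fun n m ↦ by simp)]
      infer_instance
    exact hs ((Module.End.eigenvectors_linearIndependent (C : Module.End ℂ V)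
      {μ + 2 * n | n : ℕ}
      (fun s ↦ (A ^ Classical.choose s.2) y)
      (fun s ↦ by simp [hC, Classical.choose_spec s.2, contra,
        Module.End.hasEigenvector_iff, Module.End.mem_eigenspace_iff])).finite)
  obtain ⟨n, hn1, hn2⟩ := Nat.exists_not_and_succ_of_not_zero_of_exists
    (p := fun n ↦ (A ^ n) y = 0) (by simpa using hy0) hex
  have hbn := hB n
  rw [hn2, map_zero, eq_comm, smul_eq_zero] at hbn
  rcases hbn with hc | h0
  · rw [neg_eq_zero, mul_eq_zero] at hc
    rcases hc with hc | hc
    · exact Nat.cast_add_one_ne_zero n hc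
    · exact hμ n hc
  · exact hn1 h0


/-- Let `L` be a finite-dimensional Lie algebra over `ℂ` and let
`(e, h, f)` be an `sl₂`-triple in `L`.  For `j : ℤ` let
`L_j = {x ∈ L : ⁅h, x⁆ = (j : ℂ) • x}`.  Then for every `j ≤ -1`, any `x ∈ L_j` with
`⁅e, x⁆ = 0` satisfies `x = 0`, and for every `j ≥ -1` and every `y ∈ L_{j+2}` there is
`x ∈ L_j` with `⁅e, x⁆ = y`.  In other words the Dynkin grading determined by `h` is a
good `ℤ`-grading for `e`. -/
theorem dynkin_grading_is_good
    (L : Type*) [LieRing L] [LieAlgebra ℂ L] [Module.Finite ℂ L]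
    (e h f : L) (he : e ≠ 0)
    (hhe : ⁅h, e⁆ = (2 : ℂ) • e) (hhf : ⁅h, f⁆ = (-2 : ℂ) • f) (hef : ⁅e, f⁆ = h) :
    (∀ j : ℤ, j ≤ -1 → ∀ x : L, ⁅h, x⁆ = (j : ℂ) • x → ⁅e, x⁆ = 0 → x = 0) ∧
    (∀ j : ℤ, -1 ≤ j → ∀ y : L, ⁅h, y⁆ = ((j : ℂ) + 2) • y →
      ∃ x : L, ⁅h, x⁆ = (j : ℂ) • x ∧ ⁅e, x⁆ = y) := by
  constructor
  · intro j hj x hx hex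
    refine key (LieAlgebra.ad ℂ L f) (LieAlgebra.ad ℂ L e) (-(LieAlgebra.ad ℂ L h))
      ?_ ?_ (-(j : ℂ)) ?_ x ?_ ?_
    · intro v
      have hl : ⁅h, ⁅f, v⁆⁆ = ⁅⁅h, f⁆, v⁆ + ⁅f, ⁅h, v⁆⁆ := leibniz_lie h f v
      rw [hhf, smul_lie] at hl
      simp only [LinearMap.neg_apply, LieAlgebra.ad_apply, lie_neg]
      rw [hl]
      module
    · intro v
      have hl : ⁅e, ⁅f, v⁆⁆ = ⁅⁅e, f⁆, v⁆ + ⁅f, ⁅e, v⁆⁆ := leibniz_lie e f v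
      rw [hef] at hl
      simp only [LinearMap.neg_apply, LieAlgebra.ad_apply]
      rw [hl]
      abel
    · intro k hk
      have hne : (((k : ℤ) - j : ℤ) : ℂ) ≠ 0 := Int.cast_ne_zero.mpr (by omega)
      apply hne
      push_cast
      linear_combination hk
    · simp only [LinearMap.neg_apply, LieAlgebra.ad_apply, hx]
      module
    · simp only [LieAlgebra.ad_apply, hex, lie_zero]
  · intro j hj y hy
    set μ : ℂ := (j : ℂ) + 2 with hμdef
    have hFw : ∀ v : L, ⁅h, v⁆ = μ • v → ⁅h, ⁅f, v⁆⁆ = ((j : ℂ)) • ⁅f, v⁆ := by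
      intro v hv
      rw [leibniz_lie, hhf, smul_lie, hv, lie_smul, hμdef]
      module
    have hEw : ∀ v : L, ⁅h, v⁆ = μ • v → ⁅h, ⁅e, ⁅f, v⁆⁆⁆ = μ • ⁅e, ⁅f, v⁆⁆ := by
      intro v hv
      rw [leibniz_lie h e ⁅f, v⁆, hhe, smul_lie, hFw v hv, lie_smul, hμdef]
      module
    have hmemW : ∀ v : L,
        v ∈ Module.End.eigenspace (LieAlgebra.ad ℂ L h) μ ↔ ⁅h, v⁆ = μ • v := by
      intro v
      rw [Module.End.mem_eigenspace_iff, LieAlgebra.ad_apply]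
    have hmaps : ∀ v ∈ Module.End.eigenspace (LieAlgebra.ad ℂ L h) μ,
        ((LieAlgebra.ad ℂ L e).comp (LieAlgebra.ad ℂ L f)) v ∈
          Module.End.eigenspace (LieAlgebra.ad ℂ L h) μ := by
      intro v hv
      rw [hmemW] at hv ⊢
      simpa only [LinearMap.comp_apply, LieAlgebra.ad_apply] using hEw v hv
    have hinj : Function.Injective
        (((LieAlgebra.ad ℂ L e).comp (LieAlgebra.ad ℂ L f)).restrict hmaps) := by
      intro v w hvw
      rw [← sub_eq_zero, ← map_sub] at hvw
      rw [← sub_eq_zero]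
      refine Subtype.ext (key (LieAlgebra.ad ℂ L e) (LieAlgebra.ad ℂ L f)
        (LieAlgebra.ad ℂ L h) ?_ ?_ μ ?_ ((v - w : _) : L) ?_ ?_)
      · intro u
        have hl : ⁅h, ⁅e, u⁆⁆ = ⁅⁅h, e⁆, u⁆ + ⁅e, ⁅h, u⁆⁆ := leibniz_lie h e u
        rw [hhe, smul_lie] at hl
        simp only [LieAlgebra.ad_apply]
        rw [hl]
        module
      · intro u
        have hl : ⁅e, ⁅f, u⁆⁆ = ⁅⁅e, f⁆, u⁆ + ⁅f, ⁅e, u⁆⁆ := leibniz_lie e f u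
        rw [hef] at hl
        simp only [LieAlgebra.ad_apply]
        rw [hl]
        abel
      · intro k hk
        have hne : ((j + 2 + (k : ℤ) : ℤ) : ℂ) ≠ 0 := Int.cast_ne_zero.mpr (by omega)
        apply hne
        push_cast
        linear_combination hk
      · exact Module.End.mem_eigenspace_iff.mp (v - w).2
      · have := congrArg (Subtype.val) hvw
        rw [LinearMap.restrict_apply] at this
        simpa only [LinearMap.comp_apply, ZeroMemClass.coe_zero] using this
    have hsurj := (LinearMap.injective_iff_surjective).mp hinj
    obtain ⟨w, hw⟩ := hsurj ⟨y, (hmemW y).mpr hy⟩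
    refine ⟨⁅f, (w : L)⁆, ?_, ?_⟩
    · exact hFw (w : L) ((hmemW _).mp w.2)
    · have := congrArg (Subtype.val) hw
      rw [LinearMap.restrict_apply] at this
      simpa only [LinearMap.comp_apply, LieAlgebra.ad_apply] using this
end

section
/- Let L be a finite-dimensional Lie algebra over ℂ and let (e,h,f) be an sl₂-triple in L. Then every x ∈ L with ⁅e,x⁆ = 0 lies in the sum ⨆_{j ∈ ℕ} {y ∈ L : ⁅h,y⁆ = (j:ℂ) • y} of the eigenspaces of ad h for nonnegative integer eigenvalues; that is, all eigenvalues of ad h on the centralizer of e in L are nonnegative integers. -/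
/-!
The centralizer of `e` is stable under `ad h`, so over `ℂ` it is the sum of its intersections
with the generalized eigenspaces of `ad h`. On the centralizer `ad h` has no Jordan blocks:
if `⁅e, y⁆ = 0` and `⁅h, y⁆ = n • y + z` with `z` primitive of weight `n`, the `f`-string of `y`
must terminate, and descending along it with `e` forces `f^(n+1) y = 0` and then
`(n + 1) • f^n z = 0`, contradicting `f^n z ≠ 0`. Finally, an eigenvector of `ad h` killed by
`ad e` is a primitive vector, so its eigenvalue is a natural number.
-/

open LieModule Module

lemma Module.End.exists_eq_zero_of_apply_eq_smul {R M ι : Type*} [CommRing R] [IsDomain R]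
    [AddCommGroup M] [Module R M] [IsTorsionFree R M] [IsNoetherian R M] [Infinite ι]
    (φ : End R M) {μ : ι → R} (hμ : Function.Injective μ) {v : ι → M}
    (hv : ∀ i, φ (v i) = μ i • v i) : ∃ i, v i = 0 := by
  by_contra! hv0
  have := (φ.eigenvectors_linearIndependent' μ hμ v fun i ↦
    ⟨mem_eigenspace_iff.mpr (hv i), hv0 i⟩).finite
  exact not_finite ι

lemma LieModule.toEnd_pow_succ_apply {R L M : Type*} [CommRing R] [LieRing L] [LieAlgebra R L]
    [AddCommGroup M] [Module R M] [LieRingModule L M] [LieModule R L M] (x : L) (n : ℕ) (m : M) :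
    (toEnd R L M x ^ (n + 1)) m = ⁅x, (toEnd R L M x ^ n) m⁆ := by
  simp [pow_succ']

namespace IsSl2Triple

variable {R L M : Type*} [CommRing R] [LieRing L] [LieAlgebra R L]
  [AddCommGroup M] [Module R M] [LieRingModule L M] [LieModule R L M]
  {h e f : L} (t : IsSl2Triple h e f)

include t

lemma lie_e_lie_h_eq_zero {m : M} (hm : ⁅e, m⁆ = 0) : ⁅e, ⁅h, m⁆⁆ = 0 := by
  rw [leibniz_lie, hm, lie_zero, add_zero, ← lie_skew, t.lie_h_e_nsmul, neg_lie, nsmul_lie, hm,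
    smul_zero, neg_zero]

section GeneralizedEigenvector

variable {y z : M} {μ : R}

lemma lie_h_pow_toEnd_f_of_lie_h_eq_smul_add (hy : ⁅h, y⁆ = μ • y + z) (n : ℕ) :
    ⁅h, (toEnd R L M f ^ n) y⁆ =
      (μ - 2 * n) • (toEnd R L M f ^ n) y + (toEnd R L M f ^ n) z := by
  induction n with
  | zero => simpa using hy
  | succ n ih =>
    rw [toEnd_pow_succ_apply, toEnd_pow_succ_apply, leibniz_lie h, t.lie_lie_smul_f R, ih,
      neg_lie, smul_lie, lie_add, lie_smul]
    push_cast
    module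

lemma lie_e_pow_succ_toEnd_f_of_lie_h_eq_smul_add (hey : ⁅e, y⁆ = 0)
    (hy : ⁅h, y⁆ = μ • y + z) (n : ℕ) :
    ⁅e, (toEnd R L M f ^ (n + 1)) y⁆ =
      ((n + 1) * (μ - n)) • (toEnd R L M f ^ n) y + ((n : R) + 1) • (toEnd R L M f ^ n) z := by
  induction n with
  | zero =>
    simp only [toEnd_pow_succ_apply, pow_zero, End.one_apply, leibniz_lie e f, t.lie_e_f, hey,
      lie_zero, add_zero, hy]
    module
  | succ n ih =>
    rw [toEnd_pow_succ_apply _ (n + 1), leibniz_lie e f, t.lie_e_f,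
      t.lie_h_pow_toEnd_f_of_lie_h_eq_smul_add hy, ih, lie_add, lie_smul, lie_smul,
      ← toEnd_pow_succ_apply, ← toEnd_pow_succ_apply]
    push_cast
    module

end GeneralizedEigenvector

variable [IsDomain R] [CharZero R] [IsNoetherian R M] [IsTorsionFree R M]

lemma eq_zero_of_lie_h_eq_smul_add {y z : M} {μ : R} (hey : ⁅e, y⁆ = 0)
    (hy : ⁅h, y⁆ = μ • y + z) (hez : ⁅e, z⁆ = 0) (hz : ⁅h, z⁆ = μ • z) : z = 0 := by
  by_contra hz0
  have P : t.HasPrimitiveVectorWith z μ := ⟨hz0, hz, hez⟩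
  obtain ⟨n, rfl⟩ := P.exists_nat
  have hz_top (k : ℕ) : (toEnd R L M f ^ (k + (n + 1))) z = 0 := by
    rw [pow_add, End.mul_apply, P.pow_toEnd_f_eq_zero_of_eq_nat rfl, map_zero]
  -- beyond `n`, the vectors `f^k y` are eigenvectors of `h` with distinct eigenvalues
  obtain ⟨k, hk⟩ : ∃ k, (toEnd R L M f ^ (k + (n + 1))) y = 0 := by
    refine (toEnd R L M h).exists_eq_zero_of_apply_eq_smul
      (μ := fun k : ℕ ↦ (n : R) - 2 * (k + (n + 1) : ℕ)) (fun a b hab ↦ by simpa using hab)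
      fun k ↦ ?_
    rw [toEnd_apply_apply, t.lie_h_pow_toEnd_f_of_lie_h_eq_smul_add hy, hz_top, add_zero]
  have hdown (k : ℕ) (hk : (toEnd R L M f ^ (k + (n + 1) + 1)) y = 0) :
      (toEnd R L M f ^ (k + (n + 1))) y = 0 := by
    have := t.lie_e_pow_succ_toEnd_f_of_lie_h_eq_smul_add hey hy (k + (n + 1))
    rw [hk, hz_top, lie_zero, smul_zero, add_zero, eq_comm, smul_eq_zero] at this
    exact this.resolve_left <| mul_ne_zero (Nat.cast_add_one_ne_zero _) <|
      sub_ne_zero.mpr <| Nat.cast_injective.ne (by omega)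
  have hsucc : (toEnd R L M f ^ (n + 1)) y = 0 := by
    induction k with
    | zero => simpa using hk
    | succ k ih => exact ih (hdown k (by rwa [Nat.add_right_comm]))
  have := t.lie_e_pow_succ_toEnd_f_of_lie_h_eq_smul_add hey hy n
  rw [hsucc, lie_zero, sub_self, mul_zero, zero_smul, zero_add, eq_comm, smul_eq_zero] at this
  exact P.pow_toEnd_f_ne_zero_of_eq_nat rfl le_rfl (this.resolve_left (Nat.cast_add_one_ne_zero n))

lemma ker_toEnd_e_inf_maxGenEigenspace_le_eigenspace (μ : R) :
    LinearMap.ker (toEnd R L M e) ⊓ (toEnd R L M h).maxGenEigenspace μ ≤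
      (toEnd R L M h).eigenspace μ := by
  rintro m ⟨hem : ⁅e, m⁆ = 0, hm⟩
  obtain ⟨k, hk⟩ := (End.mem_maxGenEigenspace _ _ _).mp hm
  clear hm
  rw [End.mem_eigenspace_iff, toEnd_apply_apply]
  induction k generalizing m with
  | zero => simp_all
  | succ k ih =>
    have hew : ⁅e, ⁅h, m⁆ - μ • m⁆ = 0 := by
      rw [lie_sub, lie_smul, t.lie_e_lie_h_eq_zero hem, hem, smul_zero, sub_zero]
    have hw : ⁅h, ⁅h, m⁆ - μ • m⁆ = μ • (⁅h, m⁆ - μ • m) :=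
      ih hew (by rwa [pow_succ, End.mul_apply] at hk)
    exact sub_eq_zero.mp <|
      t.eq_zero_of_lie_h_eq_smul_add hem (add_sub_cancel _ _).symm hew hw

lemma ker_toEnd_e_inf_maxGenEigenspace_le_iSup_eigenspace_nat (μ : R) :
    LinearMap.ker (toEnd R L M e) ⊓ (toEnd R L M h).maxGenEigenspace μ ≤
      ⨆ n : ℕ, (toEnd R L M h).eigenspace n := by
  intro m hm
  have hm_eigen := t.ker_toEnd_e_inf_maxGenEigenspace_le_eigenspace μ hm
  rcases eq_or_ne m 0 with rfl | hm0
  · exact zero_mem _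
  have P : t.HasPrimitiveVectorWith m μ := ⟨hm0, End.mem_eigenspace_iff.mp hm_eigen, hm.1⟩
  obtain ⟨n, rfl⟩ := P.exists_nat
  exact Submodule.mem_iSup_of_mem n hm_eigen

end IsSl2Triple

lemma IsSl2Triple.ker_toEnd_e_le_iSup_eigenspace_nat {K L M : Type*} [Field K] [IsAlgClosed K]
    [CharZero K] [LieRing L] [LieAlgebra K L] [AddCommGroup M] [Module K M] [LieRingModule L M]
    [LieModule K L M] [FiniteDimensional K M] {h e f : L} (t : IsSl2Triple h e f) :
    LinearMap.ker (toEnd K L M e) ≤ ⨆ n : ℕ, (toEnd K L M h).eigenspace n := by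
  have hinv (m : M) (hm : m ∈ LinearMap.ker (toEnd K L M e)) :
      toEnd K L M h m ∈ LinearMap.ker (toEnd K L M e) :=
    t.lie_e_lie_h_eq_zero hm
  calc LinearMap.ker (toEnd K L M e)
      = LinearMap.ker (toEnd K L M e) ⊓ ⨆ μ, (toEnd K L M h).maxGenEigenspace μ := by
        rw [End.iSup_maxGenEigenspace_eq_top, inf_top_eq]
    _ = ⨆ μ, LinearMap.ker (toEnd K L M e) ⊓ (toEnd K L M h).maxGenEigenspace μ :=
        Submodule.inf_iSup_genEigenspace hinv ⊤
    _ ≤ _ := iSup_le t.ker_toEnd_e_inf_maxGenEigenspace_le_iSup_eigenspace_nat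

/-- Let `L` be a finite-dimensional Lie algebra over `ℂ` and let
`(e, h, f)` be an `sl₂`-triple in `L`.  Then every `x ∈ L` with `⁅e, x⁆ = 0` lies in
the sum of the eigenspaces of `ad h` for nonnegative integer eigenvalues; that is,
all eigenvalues of `ad h` on the centralizer of `e` in `L` are nonnegative integers. -/
theorem centralizer_in_nonneg_eigenspaces
    (L : Type*) [LieRing L] [LieAlgebra ℂ L] [Module.Finite ℂ L]
    (e h f : L) (he : e ≠ 0)
    (hhe : ⁅h, e⁆ = (2 : ℂ) • e) (hhf : ⁅h, f⁆ = (-2 : ℂ) • f) (hef : ⁅e, f⁆ = h)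
    (x : L) (hx : ⁅e, x⁆ = 0) :
    x ∈ ⨆ j : ℕ, Module.End.eigenspace (LieAlgebra.ad ℂ L h) (j : ℂ) := by
  have t : IsSl2Triple h e f :=
    { h_ne_zero := by
        rintro rfl
        exact he (by simpa using hhe.symm)
      lie_e_f := hef
      lie_h_e_nsmul := by rw [hhe, two_smul, two_nsmul]
      lie_h_f_nsmul := by rw [hhf, neg_smul, two_smul, two_nsmul] }
  exact t.ker_toEnd_e_le_iSup_eigenspace_nat (M := L) hx
end

section
/- Let P be a pyramid with row lengths r_1 ≥ ... ≥ r_N ≥ 1, and let e(P), h(P) be the associated endomorphisms of V(P) = ℂ^{B(P)}. Then ⁅h(P), e(P)⁆ = 2 • e(P) (commutator bracket on End(V(P))), and the pair (h(P), e(P)) is good: for every integer j ≤ -1 the map x ↦ ⁅e(P),x⁆ is injective from {x ∈ End(V(P)) : ⁅h(P),x⁆ = j • x} to {x : ⁅h(P),x⁆ = (j+2) • x}, and for every integer j ≥ -1 it is surjective onto {x : ⁅h(P),x⁆ = (j+2) • x}. -/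
/-- A pyramid with row lengths `r 0 ≥ r 1 ≥ ... ≥ r (N-1) ≥ 1` (bottom row first).
Row `j` consists of boxes at columns `f j, f j + 2, ..., l j` where
`l j = f j + 2 * (r j - 1)`; the bottom row is centered at `0` (`f 0 = -(l 0)`), and
consecutive rows satisfy `f j ≤ f (j+1) ≤ l (j+1) ≤ l j`. -/
structure Pyramid where
  N : ℕ
  hN : 0 < N
  r : Fin N → ℕ
  f : Fin N → ℤ
  r_pos : ∀ j, 0 < r j
  r_anti : ∀ i j : Fin N, i ≤ j → r j ≤ r i
  centered : f ⟨0, hN⟩ = -(f ⟨0, hN⟩ + 2 * ((r ⟨0, hN⟩ : ℤ) - 1))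
  left_nested : ∀ i j : Fin N, (i : ℕ) + 1 = (j : ℕ) → f i ≤ f j
  right_nested : ∀ i j : Fin N, (i : ℕ) + 1 = (j : ℕ) →
    f j + 2 * ((r j : ℤ) - 1) ≤ f i + 2 * ((r i : ℤ) - 1)

namespace Pyramid

/-- The set of boxes of the pyramid: the `i`-th box (from the left) of row `j`. -/
abbrev Box (P : Pyramid) : Type := (j : Fin P.N) × Fin (P.r j)

/-- The column (first coordinate) of a box: box `(j, i)` sits at column `f j + 2 * i`. -/
def col (P : Pyramid) (b : P.Box) : ℤ := P.f b.1 + 2 * (b.2 : ℤ)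

/-- The vector space `V(P) = ℂ^{B(P)}`. -/
abbrev V (P : Pyramid) : Type := P.Box → ℂ

/-- The nilpotent endomorphism `e(P)` of `V(P)`, sending the basis vector of a box to
the basis vector of its right neighbour (i.e. the box in the same row whose column is
larger by 2), or to `0` if there is no right neighbour. -/
noncomputable def E (P : Pyramid) : Module.End ℂ P.V :=
  Matrix.toLin' (Matrix.of fun b b' : P.Box =>
    if b.1 = b'.1 ∧ (b.2 : ℕ) = (b'.2 : ℕ) + 1 then (1 : ℂ) else 0)

/-- The semisimple endomorphism `h(P)` of `V(P)`, acting on the basis vector of a box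
by its column. -/
noncomputable def H (P : Pyramid) : Module.End ℂ P.V :=
  Matrix.toLin' (Matrix.diagonal fun b : P.Box => (P.col b : ℂ))

end Pyramid

/-- The set of `ad h`-eigenvectors of `End(V)` with eigenvalue `j ∈ ℤ`:
the `j`-th graded piece of the `ℤ`-grading of `End(V)` determined by `h`. -/
def gradedPiece {V : Type*} [AddCommGroup V] [Module ℂ V]
    (h : Module.End ℂ V) (j : ℤ) : Set (Module.End ℂ V) :=
  {x | ⁅h, x⁆ = (j : ℂ) • x}

/-- The pair `(h, e)` is *good* if `ad e` is injective from the `j`-eigenspace of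
`ad h` to the `(j+2)`-eigenspace for every integer `j ≤ -1`, and surjective onto the
`(j+2)`-eigenspace for every integer `j ≥ -1`. -/
def IsGoodPair {V : Type*} [AddCommGroup V] [Module ℂ V]
    (h e : Module.End ℂ V) : Prop :=
  (∀ j : ℤ, j ≤ -1 →
    Set.InjOn (fun x : Module.End ℂ V => ⁅e, x⁆) (gradedPiece h j)) ∧
  (∀ j : ℤ, -1 ≤ j →
    Set.SurjOn (fun x : Module.End ℂ V => ⁅e, x⁆) (gradedPiece h j)
      (gradedPiece h (j + 2)))

/-!
Identify `End V(P)` with matrices indexed by boxes. Since `h(P)` is diagonal, the `j`-eigenspace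
of `ad h(P)` consists of the matrices supported on the entries `(b, b')` with
`col b - col b' = j`, and `e(P)` lies in degree `2`.

Injectivity: if `X` commutes with `e(P)`, then in the block of rows `(s, t)` its entries are
constant along the diagonals `(p + m, q + m)` for as long as they stay in row `s`, and they
vanish at `p = 0 < q`. An entry with `p < q` is thereby pushed down to the left edge, and one
with `q ≤ p` and negative degree is pushed up past the end of row `t`, because the nesting of
the rows makes that diagonal leave row `t` before row `s`.

Surjectivity is dual to injectivity: the trace form pairs degree `k` perfectly with degree `-k`
and `ad e` is skew for it, so a functional vanishing on the image of degree `k - 2` is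
represented by an element of degree `-k` that `ad e` kills.
-/

namespace Matrix

def homogeneous {n : Type*} (K : Type*) [CommRing K] (c : n → ℤ) (k : ℤ) :
    Submodule K (Matrix n n K) where
  carrier := {X | ∀ i j, c i - c j ≠ k → X i j = 0}
  add_mem' hX hY i j h := by simp [hX i j h, hY i j h]
  zero_mem' _ _ _ := rfl
  smul_mem' a X hX i j h := by simp [hX i j h]

section CommRing

variable {n K : Type*} [Fintype n] [CommRing K] {c : n → ℤ}

lemma mul_mem_homogeneous {a b : ℤ} {A B : Matrix n n K} (hA : A ∈ homogeneous K c a)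
    (hB : B ∈ homogeneous K c b) : A * B ∈ homogeneous K c (a + b) := by
  intro i j hij
  rw [mul_apply]
  refine Finset.sum_eq_zero fun l _ => ?_
  by_cases hil : c i - c l = a
  · rw [hB l j (by omega), mul_zero]
  · rw [hA i l hil, zero_mul]

lemma lie_mem_homogeneous {a b : ℤ} {A B : Matrix n n K} (hA : A ∈ homogeneous K c a)
    (hB : B ∈ homogeneous K c b) : ⁅A, B⁆ ∈ homogeneous K c (b + a) := by
  rw [Ring.lie_def, add_comm]
  exact sub_mem (mul_mem_homogeneous hA hB) (by simpa [add_comm] using mul_mem_homogeneous hB hA)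

lemma trace_mul_lie (E X Z : Matrix n n K) :
    trace (X * ⁅E, Z⁆) = -trace (⁅E, X⁆ * Z) := by
  simp only [Ring.lie_def, mul_sub, sub_mul, trace_sub, ← Matrix.mul_assoc]
  rw [trace_mul_cycle X Z E]
  ring

lemma eq_zero_of_forall_trace_mul_eq_zero [DecidableEq n] {k : ℤ} {W : Matrix n n K}
    (hW : W ∈ homogeneous K c (-k)) (h : ∀ X ∈ homogeneous K c k, trace (X * W) = 0) :
    W = 0 := by
  ext i j
  by_cases hij : c j - c i = k
  · have hX : single j i (1 : K) ∈ homogeneous K c k := by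
      intro a b hab
      rw [single_apply, if_neg]
      rintro ⟨rfl, rfl⟩
      exact hab hij
    simpa [trace_single_mul] using h _ hX
  · exact hW i j (by omega)

lemma exists_homogeneous_trace_mul_eq [DecidableEq n] (φ : Module.Dual K (Matrix n n K))
    (k : ℤ) :
    ∃ Z ∈ homogeneous K c (-k), ∀ W ∈ homogeneous K c k, trace (W * Z) = φ W := by
  refine ⟨of fun i j => if c j - c i = k then φ (single j i 1) else 0, ?_, fun W hW => ?_⟩
  · intro i j hij
    simp only [of_apply, ite_eq_right_iff]
    omega
  · conv_rhs => rw [matrix_eq_sum_single W]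
    simp only [trace, diag_apply, mul_apply, map_sum, of_apply]
    refine Finset.sum_congr rfl fun i _ => Finset.sum_congr rfl fun j _ => ?_
    by_cases hij : c i - c j = k
    · rw [if_pos hij, ← smul_eq_mul, ← map_smul, smul_single, smul_eq_mul, mul_one]
    · rw [hW i j hij, single_zero, map_zero, zero_mul]

lemma lie_diagonal_apply [DecidableEq n] (d : n → K) (X : Matrix n n K) (i j : n) :
    ⁅diagonal d, X⁆ i j = (d i - d j) * X i j := by
  simp only [Ring.lie_def, sub_apply, diagonal_mul, mul_diagonal]
  ring

lemma toLin'_lie [DecidableEq n] (A B : Matrix n n K) :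
    ⁅toLin' A, toLin' B⁆ = toLin' ⁅A, B⁆ := by
  simp only [Ring.lie_def, map_sub, toLin'_mul]
  rfl

end CommRing

theorem surjOn_lie_homogeneous {n K : Type*} [Fintype n] [DecidableEq n] [Field K]
    {c : n → ℤ} {E : Matrix n n K} (hE : E ∈ homogeneous K c 2) {k : ℤ}
    (hker : ∀ Z ∈ homogeneous K c (-k), ⁅E, Z⁆ = 0 → Z = 0) :
    Set.SurjOn (⁅E, ·⁆) (homogeneous K c (k - 2) : Set (Matrix n n K))
      (homogeneous K c k) := by
  intro Y hY
  by_contra hYR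
  let adE : Module.End K (Matrix n n K) := LinearMap.mulLeft K E - LinearMap.mulRight K E
  have adE_apply (X : Matrix n n K) : adE X = ⁅E, X⁆ := (Ring.lie_def E X).symm
  obtain ⟨φ, hφY, hφR⟩ := Submodule.exists_dual_map_eq_bot_of_notMem
    (p := (homogeneous K c (k - 2)).map adE)
    (by rintro ⟨X, hX, hXY⟩; exact hYR ⟨X, hX, (adE_apply X).symm.trans hXY⟩) inferInstance
  obtain ⟨Z, hZ, hZφ⟩ := exists_homogeneous_trace_mul_eq (c := c) φ k
  have hEZ : ⁅E, Z⁆ = 0 := by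
    refine eq_zero_of_forall_trace_mul_eq_zero (k := k - 2)
      (by simpa [neg_sub, sub_eq_neg_add] using lie_mem_homogeneous hE hZ) fun X hX => ?_
    have hφX := Submodule.mem_map_of_mem (f := φ) (Submodule.mem_map_of_mem (f := adE) hX)
    rw [hφR, Submodule.mem_bot, adE_apply] at hφX
    rw [trace_mul_lie, hZφ _ (by simpa using lie_mem_homogeneous hE hX), neg_eq_zero]
    exact hφX
  exact hφY (by rw [← hZφ Y hY, hker Z hZ hEZ, Matrix.mul_zero, trace_zero])

end Matrix

open Matrix

section DiagonalGrading

variable {n : Type*} [Fintype n] [DecidableEq n]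

lemma toLin'_mem_gradedPiece_iff (c : n → ℤ) (k : ℤ) (X : Matrix n n ℂ) :
    toLin' X ∈ gradedPiece (toLin' (diagonal fun i => (c i : ℂ))) k ↔
      X ∈ homogeneous ℂ c k := by
  rw [gradedPiece, Set.mem_ofPred_eq, toLin'_lie, ← map_smul, toLin'.injective.eq_iff]
  constructor
  · intro h i j hij
    have hij' : (c i : ℂ) - c j - k ≠ 0 := by exact_mod_cast sub_ne_zero.2 hij
    have := congr_fun₂ h i j
    rw [lie_diagonal_apply, Matrix.smul_apply, smul_eq_mul] at this
    exact (mul_eq_zero.1 (by linear_combination this)).resolve_left hij'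
  · intro hX
    ext i j
    rw [lie_diagonal_apply, Matrix.smul_apply, smul_eq_mul]
    by_cases hij : c i - c j = k
    · rw [← hij]
      push_cast
      ring
    · rw [hX i j hij, mul_zero, mul_zero]

theorem isGoodPair_toLin' (c : n → ℤ) {E : Matrix n n ℂ} (hE : E ∈ homogeneous ℂ c 2)
    (hker : ∀ k < 0, ∀ X ∈ homogeneous ℂ c k, ⁅E, X⁆ = 0 → X = 0) :
    IsGoodPair (toLin' (diagonal fun i => (c i : ℂ))) (toLin' E) := by
  refine ⟨fun j hj x hx y hy hxy => ?_, fun j hj y hy => ?_⟩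
  · obtain ⟨X, rfl⟩ := toLin'.surjective x
    obtain ⟨Y, rfl⟩ := toLin'.surjective y
    rw [toLin'_mem_gradedPiece_iff] at hx hy
    simp only [toLin'_lie] at hxy
    have := hker j (by omega) (X - Y) (sub_mem hx hy)
      (by rw [Ring.lie_def, mul_sub, sub_mul, sub_sub_sub_comm, ← Ring.lie_def, ← Ring.lie_def,
        toLin'.injective hxy, sub_self])
    rw [sub_eq_zero.1 this]
  · obtain ⟨Y, rfl⟩ := toLin'.surjective y
    rw [toLin'_mem_gradedPiece_iff] at hy
    obtain ⟨X, hX, rfl⟩ := surjOn_lie_homogeneous hE (k := j + 2) (hker _ (by omega)) hy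
    exact ⟨toLin' X, (toLin'_mem_gradedPiece_iff c j X).2 (by simpa using hX), toLin'_lie E X⟩

end DiagonalGrading

theorem Fin.monotone_of_le_of_val_add_one {α : Type*} [Preorder α] {N : ℕ} {g : Fin N → α}
    (h : ∀ i j : Fin N, (i : ℕ) + 1 = j → g i ≤ g j) : Monotone g := by
  rintro ⟨i, hi⟩ ⟨j, hj⟩ hij
  rw [Fin.mk_le_mk] at hij
  induction j, hij using Nat.le_induction with
  | base => rfl
  | succ j hij ih => exact (ih (by omega)).trans (h _ _ rfl)

namespace Pyramid

variable (P : Pyramid)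

def l (j : Fin P.N) : ℤ := P.f j + 2 * ((P.r j : ℤ) - 1)

lemma f_monotone : Monotone P.f :=
  Fin.monotone_of_le_of_val_add_one P.left_nested

lemma l_antitone : Antitone P.l :=
  Fin.monotone_of_le_of_val_add_one (g := fun j => OrderDual.toDual (P.l j)) P.right_nested

lemma add_r_lt_of_col_lt {b b' : P.Box} (h : (b'.2 : ℕ) ≤ b.2) (hcol : P.col b < P.col b') :
    (b.2 : ℕ) + P.r b'.1 < P.r b.1 + b'.2 := by
  obtain ⟨s, p, hp⟩ := b
  obtain ⟨t, q, hq⟩ := b'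
  simp only [col] at h hcol ⊢
  rcases le_total s t with hst | hts
  · have := P.l_antitone hst
    simp only [l] at this
    omega
  · have := P.f_monotone hts
    omega

def shiftMatrix : Matrix P.Box P.Box ℂ :=
  of fun b b' => if b.1 = b'.1 ∧ (b.2 : ℕ) = b'.2 + 1 then 1 else 0

lemma shiftMatrix_mem_homogeneous : P.shiftMatrix ∈ homogeneous ℂ P.col 2 := by
  rintro ⟨s, p, hp⟩ ⟨t, q, hq⟩ h
  simp only [shiftMatrix, of_apply, ite_eq_right_iff, one_ne_zero, imp_false, not_and]
  rintro rfl hpq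
  simp only [col] at h
  omega

lemma shiftMatrix_mul_apply_succ (X : Matrix P.Box P.Box ℂ) {s : Fin P.N} {p : ℕ}
    (hp : p + 1 < P.r s) (b' : P.Box) :
    (P.shiftMatrix * X) ⟨s, p + 1, hp⟩ b' = X ⟨s, p, by omega⟩ b' := by
  rw [mul_apply, Finset.sum_eq_single ⟨s, p, by omega⟩]
  · simp [shiftMatrix]
  · rintro ⟨t, q, hq⟩ - hne
    rw [shiftMatrix, of_apply, if_neg, zero_mul]
    rintro ⟨rfl, hpq⟩
    simp only at hpq
    exact hne (by congr; omega)
  · simp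

lemma shiftMatrix_mul_apply_zero (X : Matrix P.Box P.Box ℂ) {s : Fin P.N} (hs : 0 < P.r s)
    (b' : P.Box) : (P.shiftMatrix * X) ⟨s, 0, hs⟩ b' = 0 :=
  Finset.sum_eq_zero fun b _ => by simp [shiftMatrix]

lemma mul_shiftMatrix_apply (X : Matrix P.Box P.Box ℂ) (b : P.Box) {t : Fin P.N} {q : ℕ}
    (hq : q < P.r t) :
    (X * P.shiftMatrix) b ⟨t, q, hq⟩ =
      if h : q + 1 < P.r t then X b ⟨t, q + 1, h⟩ else 0 := by
  rw [mul_apply]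
  split_ifs with h
  · rw [Finset.sum_eq_single ⟨t, q + 1, h⟩]
    · simp [shiftMatrix]
    · rintro ⟨u, i, hi⟩ - hne
      rw [shiftMatrix, of_apply, if_neg, mul_zero]
      rintro ⟨rfl, hiq⟩
      simp only at hiq
      exact hne (by congr)
    · simp
  · refine Finset.sum_eq_zero fun ⟨u, i, hi⟩ _ => ?_
    rw [shiftMatrix, of_apply, if_neg, mul_zero]
    rintro ⟨rfl, hiq⟩
    simp only at hiq h
    omega

def entry (X : Matrix P.Box P.Box ℂ) (s t : Fin P.N) (p q : ℕ) : ℂ :=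
  if h : p < P.r s ∧ q < P.r t then X ⟨s, p, h.1⟩ ⟨t, q, h.2⟩ else 0

variable {P}

lemma entry_of_lt (X : Matrix P.Box P.Box ℂ) {s t : Fin P.N} {p q : ℕ} (hp : p < P.r s)
    (hq : q < P.r t) : P.entry X s t p q = X ⟨s, p, hp⟩ ⟨t, q, hq⟩ :=
  dif_pos ⟨hp, hq⟩

lemma entry_of_not_lt (X : Matrix P.Box P.Box ℂ) {s t : Fin P.N} {p q : ℕ}
    (h : ¬(p < P.r s ∧ q < P.r t)) : P.entry X s t p q = 0 :=
  dif_neg h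

lemma entry_eq_entry_succ_of_lie_eq_zero {X : Matrix P.Box P.Box ℂ}
    (hX : ⁅P.shiftMatrix, X⁆ = 0) {s t : Fin P.N} {p q : ℕ} (hp : p + 1 < P.r s) :
    P.entry X s t p q = P.entry X s t (p + 1) (q + 1) := by
  by_cases hq : q < P.r t
  · have h := congr_fun₂ hX ⟨s, p + 1, hp⟩ ⟨t, q, hq⟩
    rw [Ring.lie_def, Matrix.sub_apply, shiftMatrix_mul_apply_succ, mul_shiftMatrix_apply] at h
    split_ifs at h with hq'
    · rw [entry_of_lt X (by omega) hq, entry_of_lt X hp hq']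
      exact sub_eq_zero.1 h
    · rw [entry_of_lt X (by omega) hq, entry_of_not_lt X (by omega)]
      simpa using h
  · rw [entry_of_not_lt X (by omega), entry_of_not_lt X (by omega)]

lemma entry_zero_succ_of_lie_eq_zero {X : Matrix P.Box P.Box ℂ}
    (hX : ⁅P.shiftMatrix, X⁆ = 0) {s t : Fin P.N} (q : ℕ) : P.entry X s t 0 (q + 1) = 0 := by
  by_cases h : 0 < P.r s ∧ q + 1 < P.r t
  · have h' := congr_fun₂ hX ⟨s, 0, h.1⟩ ⟨t, q, by omega⟩
    rw [Ring.lie_def, Matrix.sub_apply, shiftMatrix_mul_apply_zero, mul_shiftMatrix_apply,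
      dif_pos h.2] at h'
    rw [entry_of_lt X h.1 h.2]
    simpa using h'
  · exact entry_of_not_lt X h

lemma entry_eq_entry_add_of_lie_eq_zero {X : Matrix P.Box P.Box ℂ}
    (hX : ⁅P.shiftMatrix, X⁆ = 0) {s t : Fin P.N} {p q m : ℕ} (h : p + m < P.r s) :
    P.entry X s t p q = P.entry X s t (p + m) (q + m) := by
  induction m with
  | zero => rfl
  | succ m ih => rw [ih (by omega), entry_eq_entry_succ_of_lie_eq_zero hX (by omega)]; rfl

theorem eq_zero_of_lie_shiftMatrix_eq_zero {k : ℤ} (hk : k < 0) {X : Matrix P.Box P.Box ℂ}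
    (hX : X ∈ homogeneous ℂ P.col k) (hEX : ⁅P.shiftMatrix, X⁆ = 0) : X = 0 := by
  ext ⟨s, p, hp⟩ ⟨t, q, hq⟩
  rw [Matrix.zero_apply, ← entry_of_lt X hp hq]
  rcases lt_or_ge p q with hpq | hqp
  · obtain ⟨d, rfl⟩ : ∃ d, q = p + (d + 1) := ⟨q - p - 1, by omega⟩
    have h := entry_eq_entry_add_of_lie_eq_zero hEX (s := s) (t := t) (p := 0) (q := d + 1)
      (m := p) (by omega)
    rw [zero_add, add_comm (d + 1), entry_zero_succ_of_lie_eq_zero hEX] at h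
    exact h.symm
  · by_contra hne
    have hcol : P.col ⟨s, p, hp⟩ - P.col ⟨t, q, hq⟩ = k := by
      by_contra h
      exact hne (by rw [entry_of_lt X hp hq]; exact hX _ _ h)
    have hlt : p + P.r t < P.r s + q :=
      P.add_r_lt_of_col_lt (b := ⟨s, p, hp⟩) (b' := ⟨t, q, hq⟩) hqp (by omega)
    have h := entry_eq_entry_add_of_lie_eq_zero hEX (s := s) (t := t) (p := p) (q := q)
      (m := P.r t - q) (by omega)
    exact hne (h.trans (entry_of_not_lt X (by omega)))

end Pyramid

/-- For any pyramid `P`, the associated endomorphisms of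
`V(P) = ℂ^{B(P)}` satisfy `⁅h(P), e(P)⁆ = 2 • e(P)` (commutator bracket on
`End(V(P))`), and the pair `(h(P), e(P))` is good: for every integer `j ≤ -1` the map
`x ↦ ⁅e(P), x⁆` is injective from the `j`-eigenspace of `ad h(P)` to the
`(j+2)`-eigenspace, and for every integer `j ≥ -1` it is surjective onto the
`(j+2)`-eigenspace. -/
theorem pyramid_pair_is_good (P : Pyramid) :
    ⁅P.H, P.E⁆ = (2 : ℂ) • P.E ∧ IsGoodPair P.H P.E := by
  have hE := P.shiftMatrix_mem_homogeneous
  refine ⟨?_, isGoodPair_toLin' P.col hE fun k hk X hX hEX =>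
    Pyramid.eq_zero_of_lie_shiftMatrix_eq_zero hk hX hEX⟩
  have h2 := (toLin'_mem_gradedPiece_iff P.col 2 _).2 hE
  rwa [gradedPiece, Set.mem_ofPred_eq, Int.cast_ofNat] at h2
end

section
/- Let V = V₀ ⊕ V₁ be a finite-dimensional complex vector space and let e ∈ End(V) be nilpotent with e(V₀) ⊆ V₀ and e(V₁) ⊆ V₁. Then there exists h ∈ End(V) with h(V₀) ⊆ V₀ and h(V₁) ⊆ V₁, h diagonalizable with all eigenvalues even integers, ⁅h,e⁆ = 2 • e, and such that the pair (h,e) is good: ad e is injective from the j-eigenspace of ad h to the (j+2)-eigenspace for every integer j ≤ -1 and surjective for every integer j ≥ -1. In particular, the grading determined by h is even (all eigenvalues of ad h are even integers). (Every nilpotent even element of gl(m|n) has a good even ℤ-grading.) -/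
/-!
Split `V₀` and `V₁` into Jordan chains of `e`; together they form a basis of `V` in which `e`
shifts each chain `v, e v, …, e ^ (k - 1) v` forward. Let `h` act on `e ^ i v` by
`2 (i - ⌊(k - 1) / 2⌋)`: this is the weight `2 i - k + 1` of the `sl₂`-triple through `e`, raised
by one on chains of even length, which makes every eigenvalue even.

In the matrix units of this basis `ad h` is diagonal, and in the block `Hom(chain c, chain b)` the
entry `(i, j)` of `⁅e, x⁆` is `x (i - 1, j) - x (i, j + 1)`, entries outside the block being zero.
So an `x` commuting with `e` is constant along diagonals and vanishes on every diagonal that starts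
strictly right of the top left corner or ends strictly above the bottom right corner; all other
diagonals have degree `≥ 0`. Conversely, `⁅e, x⁆ = y` is solved by partial sums of `y` along
diagonals, downwards on and below the main diagonal and upwards above it; for `y` of degree `≥ 1`
the boundary terms of these sums vanish.
-/

open Module Submodule Set

universe u

theorem Module.End.coe_pow_restrict_apply {R M : Type*} [Ring R] [AddCommGroup M] [Module R M]
    {f : Module.End R M} {p : Submodule R M} {hf : ∀ x ∈ p, f x ∈ p} (n : ℕ) (x : p) :
    (((f.restrict hf) ^ n) x : M) = (f ^ n) x := by
  rw [Module.End.pow_restrict]; rfl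

theorem Module.Basis.sumExtend_apply_inl {K V ι : Type*} [DivisionRing K] [AddCommGroup V]
    [Module K V] {v : ι → V} (hs : LinearIndependent K v) (i : ι) :
    Basis.sumExtend hs (Sum.inl i) = v i := by
  simp [Basis.sumExtend]; rfl

theorem Submodule.top_le_of_ker_le_of_range_le_map {R M N : Type*} [Ring R] [AddCommGroup M]
    [Module R M] [AddCommGroup N] [Module R N] {f : M →ₗ[R] N} {p : Submodule R M}
    (hker : LinearMap.ker f ≤ p) (hrange : LinearMap.range f ≤ p.map f) : ⊤ ≤ p := by
  intro w _
  obtain ⟨u, hu, hfu⟩ := hrange (LinearMap.mem_range_self f w)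
  simpa using p.add_mem (hker (show w - u ∈ LinearMap.ker f by simp [hfu])) hu

theorem Ring.lie_sub {R : Type*} [NonUnitalNonAssocRing R] (x y z : R) :
    ⁅x, y - z⁆ = ⁅x, y⁆ - ⁅x, z⁆ := by
  simp only [Ring.lie_def, mul_sub, sub_mul]
  abel

theorem sub_mem_gradedPiece {W : Type*} [AddCommGroup W] [Module ℂ W] {h x y : Module.End ℂ W}
    {d : ℤ} (hx : x ∈ gradedPiece h d) (hy : y ∈ gradedPiece h d) : x - y ∈ gradedPiece h d := by
  change ⁅h, x⁆ = (d : ℂ) • x at hx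
  change ⁅h, y⁆ = (d : ℂ) • y at hy
  change ⁅h, x - y⁆ = (d : ℂ) • (x - y)
  rw [Ring.lie_sub, hx, hy, smul_sub]

structure JordanBasis {K : Type*} {W : Type u} [Field K] [AddCommGroup W] [Module K W]
    (f : Module.End K W) where
  ι : Type u
  [fintype : Fintype ι]
  len : ι → ℕ
  head : ι → W
  len_pos : ∀ b, 0 < len b
  pow_len_apply_head : ∀ b, (f ^ len b) (head b) = 0
  basis : Basis (Σ b, Fin (len b)) K W
  basis_apply : ∀ p, basis p = (f ^ (p.2 : ℕ)) (head p.1)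

attribute [instance] JordanBasis.fintype

namespace JordanBasis

section Field

variable {K : Type*} {W : Type u} [Field K] [AddCommGroup W] [Module K W] {f : Module.End K W}
variable {p q : Submodule K W} {hp : ∀ x ∈ p, f x ∈ p} {hq : ∀ x ∈ q, f x ∈ q}

theorem coe_pow_len_apply_head (J : JordanBasis (f.restrict hp)) (b : J.ι) :
    (f ^ J.len b) (J.head b : W) = 0 := by
  simpa [Module.End.coe_pow_restrict_apply] using congr_arg Subtype.val (J.pow_len_apply_head b)

noncomputable def ofSubsingleton [Subsingleton W] (f : Module.End K W) : JordanBasis f where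
  ι := PEmpty
  len _ := 1
  head := PEmpty.elim
  len_pos := PEmpty.elim
  pow_len_apply_head b := b.elim
  basis := Basis.empty W
  basis_apply p := p.1.elim

variable (f) in
def chainFamily {ι : Type*} (len : ι → ℕ) (head : ι → W) : (Σ b, Fin (len b)) → W :=
  fun p ↦ (f ^ (p.2 : ℕ)) (head p.1)

noncomputable def ofChains {ι : Type u} [Fintype ι] (len : ι → ℕ) (head : ι → W)
    (len_pos : ∀ b, 0 < len b) (pow_len_apply_head : ∀ b, (f ^ len b) (head b) = 0)
    (hli : LinearIndependent K (chainFamily f len head))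
    (hspan : ⊤ ≤ span K (range (chainFamily f len head))) : JordanBasis f where
  ι := ι
  len := len
  head := head
  len_pos := len_pos
  pow_len_apply_head := pow_len_apply_head
  basis := Basis.mk hli hspan
  basis_apply := Basis.mk_apply hli hspan

theorem top_le_span_chainFamily_of_lift {hR : ∀ x ∈ LinearMap.range f, f x ∈ LinearMap.range f}
    (J : JordanBasis (f.restrict hR)) {u : J.ι → W} (hu : ∀ b, f (u b) = J.head b) {C : Type*}
    (kb : Basis (J.ι ⊕ C) K (LinearMap.ker f))
    (hkb : ∀ b, (kb (.inl b) : W) = (f ^ J.len b) (u b)) :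
    ⊤ ≤ span K (range (chainFamily f (Sum.elim (fun b ↦ J.len b + 1) fun _ ↦ 1)
      (Sum.elim u fun c ↦ (kb (.inr c) : W)))) := by
  apply top_le_of_ker_le_of_range_le_map (f := f)
  · calc LinearMap.ker f = span K (range ((LinearMap.ker f).subtype ∘ kb)) := by
          rw [range_comp, ← map_span, Basis.span_eq, map_subtype_top]
      _ ≤ _ := by
          refine span_mono (range_subset_iff.2 ?_)
          rintro (b | c)
          · exact ⟨⟨.inl b, Fin.last _⟩, by simp [chainFamily, hkb]⟩
          · exact ⟨⟨.inr c, ⟨0, Nat.one_pos⟩⟩, by simp [chainFamily]⟩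
  · calc LinearMap.range f = span K (range ((LinearMap.range f).subtype ∘ J.basis)) := by
          rw [range_comp, ← map_span, Basis.span_eq, map_subtype_top]
      _ ≤ _ := by
          rw [span_le]
          rintro _ ⟨⟨b, i⟩, rfl⟩
          refine ⟨_, subset_span ⟨⟨.inl b, i.castSucc⟩, rfl⟩, ?_⟩
          simp [chainFamily, J.basis_apply, Module.End.coe_pow_restrict_apply, ← hu,
            ← Module.End.mul_apply, ← pow_succ, ← pow_succ']

/-- Lift each chain of `f` on its range one step back, and complete the lifted chain ends to a
basis of the kernel by chains of length one. -/
theorem nonempty_of_restrict_range [FiniteDimensional K W]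
    {hR : ∀ x ∈ LinearMap.range f, f x ∈ LinearMap.range f} (J : JordanBasis (f.restrict hR)) :
    Nonempty (JordanBasis f) := by
  classical
  choose u hu using fun b ↦ (J.head b).2
  have hlast : ∀ b, (f ^ J.len b) (u b) =
      J.basis ⟨b, ⟨J.len b - 1, Nat.sub_one_lt_of_lt (J.len_pos b)⟩⟩ := fun b ↦ by
    rw [J.basis_apply, Module.End.coe_pow_restrict_apply, ← hu, ← Module.End.mul_apply,
      ← pow_succ, Nat.sub_add_cancel (J.len_pos b)]
  have hker : ∀ b, (f ^ J.len b) (u b) ∈ LinearMap.ker f := fun b ↦ by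
    rw [LinearMap.mem_ker, ← Module.End.mul_apply, ← pow_succ', pow_succ, Module.End.mul_apply,
      hu, J.coe_pow_len_apply_head]
  have hends : LinearIndependent K fun b ↦ (⟨_, hker b⟩ : LinearMap.ker f) := by
    refine LinearIndependent.of_comp (LinearMap.ker f).subtype ?_
    have := (J.basis.linearIndependent.map' _ (LinearMap.range f).ker_subtype).comp
      (fun b ↦ ⟨b, ⟨J.len b - 1, Nat.sub_one_lt_of_lt (J.len_pos b)⟩⟩)
      fun _ _ h ↦ congr_arg Sigma.fst h
    exact (funext hlast : (LinearMap.ker f).subtype ∘ (fun b ↦ ⟨_, hker b⟩) = _) ▸ this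
  set kb := Basis.sumExtend hends
  have := Module.Finite.finite_basis kb
  have : Finite (Basis.sumExtendIndex hends) :=
    Finite.of_injective _ (Sum.inr_injective (α := J.ι))
  let : Fintype (Basis.sumExtendIndex hends) := Fintype.ofFinite _
  have hspan := J.top_le_span_chainFamily_of_lift hu kb fun b ↦ by
    simp [kb, Basis.sumExtend_apply_inl]
  have hcard : Fintype.card (Σ s : J.ι ⊕ Basis.sumExtendIndex hends,
      Fin (Sum.elim (fun b ↦ J.len b + 1) (fun _ ↦ 1) s)) = finrank K W := by
    rw [← LinearMap.finrank_range_add_finrank_ker f, finrank_eq_card_basis J.basis,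
      finrank_eq_card_basis kb]
    simp [Fintype.card_sigma, Fintype.sum_sum_type, Finset.sum_add_distrib]
    ring
  refine ⟨ofChains _ _ (by rintro (b | c) <;> simp) ?_
    (linearIndependent_of_top_le_span_of_card_eq_finrank hspan hcard) hspan⟩
  rintro (b | c)
  · simp [pow_succ, hu, J.coe_pow_len_apply_head]
  · simp

theorem nonempty_of_pow_eq_zero (n : ℕ) :
    ∀ {W : Type u} [AddCommGroup W] [Module K W] [FiniteDimensional K W] (f : Module.End K W),
      f ^ n = 0 → Nonempty (JordanBasis f) := by
  induction n with
  | zero =>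
    intro W _ _ _ f hf
    have : Subsingleton W := ⟨fun x y ↦ by
      simpa using congr($hf x).trans congr($hf y).symm⟩
    exact ⟨ofSubsingleton f⟩
  | succ n ih =>
    intro W _ _ _ f hf
    refine nonempty_of_restrict_range (hR := fun x _ ↦ LinearMap.mem_range_self f x)
      (ih _ ?_).some
    ext ⟨_, y, rfl⟩
    simp [Module.End.coe_pow_restrict_apply, ← Module.End.mul_apply, ← pow_succ, hf]

theorem nonempty [FiniteDimensional K W] (hf : IsNilpotent f) : Nonempty (JordanBasis f) :=
  nonempty_of_pow_eq_zero _ f hf.choose_spec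

noncomputable def ofIsCompl (Jp : JordanBasis (f.restrict hp)) (Jq : JordanBasis (f.restrict hq))
    (hpq : IsCompl p q) : JordanBasis f where
  ι := Jp.ι ⊕ Jq.ι
  len := Sum.elim Jp.len Jq.len
  head := Sum.elim (fun b ↦ (Jp.head b : W)) fun b ↦ (Jq.head b : W)
  len_pos := by rintro (b | b) <;> simp [len_pos]
  pow_len_apply_head := by
    rintro (b | b)
    exacts [Jp.coe_pow_len_apply_head b, Jq.coe_pow_len_apply_head b]
  basis := ((Jp.basis.prod Jq.basis).map (p.prodEquivOfIsCompl q hpq)).reindex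
    (Equiv.sumSigmaDistrib fun s ↦ Fin (Sum.elim Jp.len Jq.len s)).symm
  basis_apply := by
    rintro ⟨b | b, n⟩ <;>
      simp [Basis.prod_apply, Equiv.sumSigmaDistrib, basis_apply,
        Module.End.coe_pow_restrict_apply]

variable (J : JordanBasis f)

/-! Positions in a chain are integers; the vectors and coordinate functionals at positions
outside `[0, len b)` are zero, so that shifting by `f` needs no case distinction at the ends. -/

noncomputable def vecAt (b : J.ι) (i : ℤ) : W := if 0 ≤ i then (f ^ i.toNat) (J.head b) else 0

noncomputable def coordAt (b : J.ι) (i : ℤ) : W →ₗ[K] K :=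
  if h : 0 ≤ i ∧ i < J.len b then J.basis.coord ⟨b, ⟨i.toNat, by omega⟩⟩ else 0

noncomputable def entry (x : Module.End K W) (b : J.ι) (i : ℤ) (c : J.ι) (j : ℤ) : K :=
  J.coordAt b i (x (J.vecAt c j))

theorem vecAt_coe (b : J.ι) (n : Fin (J.len b)) : J.vecAt b (n : ℕ) = J.basis ⟨b, n⟩ := by
  simp [vecAt, J.basis_apply]

theorem vecAt_eq_zero {c : J.ι} {j : ℤ} (hj : ¬(0 ≤ j ∧ j < J.len c)) : J.vecAt c j = 0 := by
  unfold vecAt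
  split_ifs with h
  · obtain ⟨n, hn⟩ : ∃ n, j.toNat = n + J.len c := ⟨j.toNat - J.len c, by omega⟩
    rw [hn, pow_add, Module.End.mul_apply, J.pow_len_apply_head, map_zero]
  · rfl

theorem apply_vecAt (c : J.ι) {j : ℤ} (hj : 0 ≤ j) : f (J.vecAt c j) = J.vecAt c (j + 1) := by
  simp [vecAt, hj, show 0 ≤ j + 1 by omega, show (j + 1).toNat = j.toNat + 1 by omega,
    pow_succ']

theorem coordAt_coe (b : J.ι) (n : Fin (J.len b)) :
    J.coordAt b (n : ℕ) = J.basis.coord ⟨b, n⟩ := by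
  simp [coordAt]

theorem coordAt_eq_zero {b : J.ι} {i : ℤ} (hi : ¬(0 ≤ i ∧ i < J.len b)) : J.coordAt b i = 0 :=
  dif_neg hi

open Classical in
theorem coordAt_vecAt (b c : J.ι) (i j : ℤ) :
    J.coordAt b i (J.vecAt c j) = if b = c ∧ i = j ∧ 0 ≤ i ∧ i < J.len b then 1 else 0 := by
  by_cases hj : 0 ≤ j ∧ j < J.len c
  · by_cases hi : 0 ≤ i ∧ i < J.len b
    · have := J.vecAt_coe c ⟨j.toNat, by omega⟩
      simp only [Int.toNat_of_nonneg hj.1] at this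
      rw [this, coordAt, dif_pos hi, Basis.coord_apply, Basis.repr_self, Finsupp.single_apply]
      by_cases hbc : b = c
      · subst hbc
        simp only [Sigma.mk.injEq, heq_eq_eq, Fin.mk.injEq, true_and]
        exact if_congr (by omega) rfl rfl
      · simp [hbc, Ne.symm hbc]
    · rw [J.coordAt_eq_zero hi, LinearMap.zero_apply, if_neg fun h ↦ hi h.2.2]
  · rw [J.vecAt_eq_zero hj, map_zero, if_neg]
    rintro ⟨rfl, rfl, h⟩
    exact hj h

theorem exists_fin_coe_eq {b : J.ι} {i : ℤ} (hi : 0 ≤ i) (hi' : i < J.len b) :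
    ∃ n : Fin (J.len b), ((n : ℕ) : ℤ) = i :=
  ⟨⟨i.toNat, by omega⟩, by simp [hi]⟩

theorem coordAt_apply {b : J.ι} {i : ℤ} (hi : i < J.len b) (w : W) :
    J.coordAt b i (f w) = J.coordAt b (i - 1) w := by
  classical
  have : J.coordAt b i ∘ₗ f = J.coordAt b (i - 1) := J.basis.ext fun ⟨c, n⟩ ↦ by
    rw [LinearMap.comp_apply, ← J.vecAt_coe, J.apply_vecAt _ (by positivity), coordAt_vecAt,
      coordAt_vecAt]
    exact if_congr (and_congr_right fun _ ↦ by omega) rfl rfl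
  exact LinearMap.congr_fun this w

theorem entry_lie {b c : J.ι} {i j : ℤ} (hi : i < J.len b) (hj : 0 ≤ j) (x : Module.End K W) :
    J.entry ⁅f, x⁆ b i c j = J.entry x b (i - 1) c j - J.entry x b i c (j + 1) := by
  simp only [entry, Ring.lie_def, LinearMap.sub_apply, Module.End.mul_apply, map_sub,
    J.coordAt_apply hi, J.apply_vecAt c hj]

@[simp]
theorem entry_zero (b : J.ι) (i : ℤ) (c : J.ι) (j : ℤ) : J.entry 0 b i c j = 0 := by
  simp [entry]

@[simp]
theorem entry_smul (a : K) (x : Module.End K W) (b : J.ι) (i : ℤ) (c : J.ι) (j : ℤ) :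
    J.entry (a • x) b i c j = a * J.entry x b i c j := by
  simp [entry]

theorem entry_eq_zero_of_row {b : J.ι} {i : ℤ} (hi : ¬(0 ≤ i ∧ i < J.len b))
    (x : Module.End K W) (c : J.ι) (j : ℤ) : J.entry x b i c j = 0 := by
  simp [entry, J.coordAt_eq_zero hi]

theorem entry_eq_zero_of_col {c : J.ι} {j : ℤ} (hj : ¬(0 ≤ j ∧ j < J.len c))
    (x : Module.End K W) (b : J.ι) (i : ℤ) : J.entry x b i c j = 0 := by
  simp [entry, J.vecAt_eq_zero hj]

theorem ext_entry {x y : Module.End K W}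
    (h : ∀ b c (i j : ℤ), 0 ≤ i → i < J.len b → 0 ≤ j → j < J.len c →
      J.entry x b i c j = J.entry y b i c j) : x = y :=
  J.basis.ext fun ⟨c, m⟩ ↦ J.basis.ext_elem fun ⟨b, n⟩ ↦ by
    simpa [entry, vecAt_coe, coordAt_coe] using h b c n m (by positivity) (by simp)
      (by positivity) (by simp)

noncomputable def ofEntries (F : J.ι → ℤ → J.ι → ℤ → K) : Module.End K W :=
  J.basis.constr K fun q ↦ ∑ p, F p.1 (p.2 : ℕ) q.1 (q.2 : ℕ) • J.basis p

theorem entry_ofEntries (F : J.ι → ℤ → J.ι → ℤ → K) {b c : J.ι} {i j : ℤ} (hi : 0 ≤ i)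
    (hi' : i < J.len b) (hj : 0 ≤ j) (hj' : j < J.len c) :
    J.entry (J.ofEntries F) b i c j = F b i c j := by
  obtain ⟨n, rfl⟩ := J.exists_fin_coe_eq hi hi'
  obtain ⟨m, rfl⟩ := J.exists_fin_coe_eq hj hj'
  rw [entry, vecAt_coe, coordAt_coe, ofEntries, Basis.constr_basis, Basis.coord_apply,
    Basis.repr_sum_self]

/-- Half the `sl₂`-weight `2 i - len b + 1`, rounded up on chains of even length. -/
def wt (b : J.ι) (i : ℤ) : ℤ := i - ((J.len b : ℤ) - 1) / 2

noncomputable def weightOp : Module.End K W :=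
  J.basis.constr K fun p ↦ ((2 * J.wt p.1 (p.2 : ℕ) : ℤ) : K) • J.basis p

theorem weightOp_vecAt (c : J.ι) (j : ℤ) :
    J.weightOp (J.vecAt c j) = ((2 * J.wt c j : ℤ) : K) • J.vecAt c j := by
  by_cases hj : 0 ≤ j ∧ j < J.len c
  · obtain ⟨m, rfl⟩ := J.exists_fin_coe_eq hj.1 hj.2
    rw [vecAt_coe, weightOp, Basis.constr_basis]
  · simp [J.vecAt_eq_zero hj]

theorem coordAt_weightOp (b : J.ι) (i : ℤ) (w : W) :
    J.coordAt b i (J.weightOp w) = ((2 * J.wt b i : ℤ) : K) * J.coordAt b i w := by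
  have : J.coordAt b i ∘ₗ J.weightOp = ((2 * J.wt b i : ℤ) : K) • J.coordAt b i :=
    J.basis.ext fun ⟨c, m⟩ ↦ by
      rw [LinearMap.comp_apply, ← J.vecAt_coe, weightOp_vecAt, map_smul, coordAt_vecAt,
        LinearMap.smul_apply, coordAt_vecAt]
      split_ifs with h
      · obtain ⟨rfl, h, -⟩ := h
        rw [h]
      · simp
  exact LinearMap.congr_fun this w

theorem entry_lie_weightOp (x : Module.End K W) (b : J.ι) (i : ℤ) (c : J.ι) (j : ℤ) :
    J.entry ⁅J.weightOp, x⁆ b i c j =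
      ((2 * (J.wt b i - J.wt c j) : ℤ) : K) * J.entry x b i c j := by
  simp only [entry, Ring.lie_def, LinearMap.sub_apply, Module.End.mul_apply, map_sub,
    coordAt_weightOp, weightOp_vecAt, map_smul, smul_eq_mul]
  push_cast
  ring

theorem lie_weightOp_self : ⁅J.weightOp, f⁆ = (2 : K) • f :=
  J.ext_entry fun b c i j _ _ hj _ ↦ by
    rw [entry_lie_weightOp, entry_smul, entry, J.apply_vecAt c hj, coordAt_vecAt]
    split_ifs with h
    · obtain ⟨rfl, rfl, -⟩ := h
      simp [wt]
    · simp

theorem iSup_eigenspace_weightOp :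
    (⨆ j : ℤ, Module.End.eigenspace J.weightOp ((2 * j : ℤ) : K)) = ⊤ := by
  rw [eq_top_iff, ← J.basis.span_eq, span_le]
  rintro _ ⟨⟨b, n⟩, rfl⟩
  refine le_iSup (fun j : ℤ ↦ Module.End.eigenspace J.weightOp ((2 * j : ℤ) : K)) (J.wt b n) ?_
  rw [Module.End.mem_eigenspace_iff, ← vecAt_coe, weightOp_vecAt]

theorem weightOp_mem (J' : JordanBasis (f.restrict hp)) (σ : J'.ι → J.ι)
    (hlen : ∀ b, J.len (σ b) = J'.len b) (hhead : ∀ b, J.head (σ b) = J'.head b) {x : W}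
    (hx : x ∈ p) : J.weightOp x ∈ p := by
  have hvec : ∀ b i, (J'.vecAt b i : W) = J.vecAt (σ b) i := fun b i ↦ by
    unfold vecAt
    split_ifs <;> simp [hhead, Module.End.coe_pow_restrict_apply]
  have : J.weightOp ∘ₗ p.subtype = p.subtype ∘ₗ J'.weightOp := J'.basis.ext fun ⟨b, n⟩ ↦ by
    simp [← vecAt_coe, weightOp_vecAt, hvec, wt, hlen]
  have := LinearMap.congr_fun this ⟨x, hx⟩
  rw [LinearMap.comp_apply, LinearMap.comp_apply, Submodule.subtype_apply] at this
  exact this ▸ (J'.weightOp ⟨x, hx⟩).2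

theorem entry_eq_of_lie_eq_zero {x : Module.End K W} (hx : ⁅f, x⁆ = 0) {b c : J.ι} {i j : ℤ}
    (hj : 0 ≤ j) (r : ℕ) (hir : i + r < J.len b) (hjr : j + r ≤ J.len c) :
    J.entry x b i c j = J.entry x b (i + r) c (j + r) := by
  induction r with
  | zero => simp
  | succ r ih =>
    push_cast at hir hjr ⊢
    have := J.entry_lie (b := b) (c := c) (i := i + (r + 1)) (j := j + r) hir (by omega) x
    rw [hx, show i + (r + 1) - 1 = i + r by ring, show j + r + 1 = j + (r + 1) by ring] at this
    rw [ih (by omega) (by omega), ← sub_eq_zero, ← this]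
    simp [entry]

theorem entry_eq_zero_of_lie_eq_zero {x : Module.End K W} (hx : ⁅f, x⁆ = 0) {b c : J.ι}
    {i j : ℤ} (hi : 0 ≤ i) (hi' : i < J.len b) (hj : 0 ≤ j) (hj' : j < J.len c)
    (h : i < j ∨ i - j < J.len b - J.len c) : J.entry x b i c j = 0 := by
  rcases h with h | h
  · have := J.entry_eq_of_lie_eq_zero hx (b := b) (c := c) (i := -1) (j := j - i - 1)
      (by omega) (i + 1).toNat (by omega) (by omega)
    rw [J.entry_eq_zero_of_row (b := b) (by omega)] at this
    convert this.symm using 2 <;> omega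
  · rw [J.entry_eq_of_lie_eq_zero hx (b := b) (c := c) hj (J.len c - j).toNat (by omega)
      (by omega), J.entry_eq_zero_of_col (c := c) (by omega)]

noncomputable def diagSumDown (y : Module.End K W) (b : J.ι) (i : ℤ) (c : J.ι) (j : ℤ) : K :=
  ∑ r ∈ Finset.range (J.len b), J.entry y b (i + r) c (j + r)

noncomputable def diagSumUp (y : Module.End K W) (b : J.ι) (i : ℤ) (c : J.ι) (j : ℤ) : K :=
  ∑ r ∈ Finset.range (J.len b), J.entry y b (i - r) c (j - r)

theorem diagSumDown_sub (y : Module.End K W) (b c : J.ι) {i : ℤ} (hi : 0 ≤ i) (j : ℤ) :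
    J.diagSumDown y b i c j - J.diagSumDown y b (i + 1) c (j + 1) = J.entry y b i c j := by
  have := Finset.sum_range_sub' (fun r : ℕ ↦ J.entry y b (i + r) c (j + r)) (J.len b)
  rw [J.entry_eq_zero_of_row (b := b) (i := i + J.len b) (by omega), Nat.cast_zero, add_zero,
    add_zero, sub_zero, Finset.sum_sub_distrib] at this
  rw [← this, diagSumDown, diagSumDown]
  congr 1
  exact Finset.sum_congr rfl fun r _ ↦ by push_cast; ring_nf

theorem diagSumUp_sub (y : Module.End K W) (b c : J.ι) {i : ℤ} (hi : i < J.len b) (j : ℤ) :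
    J.diagSumUp y b i c j - J.diagSumUp y b (i - 1) c (j - 1) = J.entry y b i c j := by
  have := Finset.sum_range_sub' (fun r : ℕ ↦ J.entry y b (i - r) c (j - r)) (J.len b)
  rw [J.entry_eq_zero_of_row (b := b) (i := i - J.len b) (by omega), Nat.cast_zero, sub_zero,
    sub_zero, sub_zero, Finset.sum_sub_distrib] at this
  rw [← this, diagSumUp, diagSumUp]
  congr 1
  exact Finset.sum_congr rfl fun r _ ↦ by push_cast; ring_nf

theorem diagSumDown_eq_zero (y : Module.End K W) (b : J.ι) (i : ℤ) {c : J.ι} {j : ℤ}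
    (hj : J.len c ≤ j) : J.diagSumDown y b i c j = 0 :=
  Finset.sum_eq_zero fun _ _ ↦ J.entry_eq_zero_of_col (by omega) _ _ _

theorem diagSumUp_eq_zero (y : Module.End K W) {b : J.ι} {i : ℤ} (hi : i < 0) (c : J.ι)
    (j : ℤ) : J.diagSumUp y b i c j = 0 :=
  Finset.sum_eq_zero fun _ _ ↦ J.entry_eq_zero_of_row (by omega) _ _ _

noncomputable def liePreimage (y : Module.End K W) : Module.End K W :=
  J.ofEntries fun b i c j ↦
    if j ≤ i then J.diagSumDown y b (i + 1) c j else -J.diagSumUp y b i c (j - 1)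

theorem entry_liePreimage_of_le (y : Module.End K W) {b c : J.ι} {i j : ℤ} (hi : i < J.len b)
    (hj : 0 ≤ j) (hji : j ≤ i) :
    J.entry (J.liePreimage y) b i c j = J.diagSumDown y b (i + 1) c j := by
  by_cases hj' : j < J.len c
  · rw [liePreimage, entry_ofEntries _ _ (by omega) hi hj hj', if_pos hji]
  · rw [J.entry_eq_zero_of_col (by omega), J.diagSumDown_eq_zero _ _ _ (by omega)]

theorem entry_liePreimage_of_lt (y : Module.End K W) {b c : J.ι} {i j : ℤ} (hi : i < J.len b)
    (hj : j < J.len c) (hij : i < j) :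
    J.entry (J.liePreimage y) b i c j = -J.diagSumUp y b i c (j - 1) := by
  by_cases hi' : 0 ≤ i
  · rw [liePreimage, entry_ofEntries _ _ hi' hi (by omega) hj, if_neg (by omega)]
  · rw [J.entry_eq_zero_of_row (by omega), J.diagSumUp_eq_zero _ (by omega), neg_zero]

end Field

section Complex

variable {W : Type u} [AddCommGroup W] [Module ℂ W] {f : Module.End ℂ W} (J : JordanBasis f)

theorem mem_gradedPiece_weightOp_iff {x : Module.End ℂ W} {d : ℤ} :
    x ∈ gradedPiece J.weightOp d ↔
      ∀ b c i j, J.entry x b i c j ≠ 0 → 2 * (J.wt b i - J.wt c j) = d := by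
  constructor
  · intro hx b c i j hne
    have := congr_arg (fun y ↦ J.entry y b i c j) (hx : ⁅J.weightOp, x⁆ = (d : ℂ) • x)
    simp only [entry_lie_weightOp, entry_smul] at this
    exact_mod_cast mul_right_cancel₀ hne this
  · intro hx
    refine J.ext_entry fun b c i j _ _ _ _ ↦ ?_
    rw [entry_lie_weightOp, entry_smul]
    by_cases h : J.entry x b i c j = 0
    · simp [h]
    · rw [hx b c i j h]

theorem eq_zero_of_lie_eq_zero {d : ℤ} (hd : d ≤ -1) {x : Module.End ℂ W}
    (hx : x ∈ gradedPiece J.weightOp d) (h0 : ⁅f, x⁆ = 0) : x = 0 :=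
  J.ext_entry fun b c i j hi hi' hj hj' ↦ by
    rw [entry_zero]
    by_contra hne
    have hdeg := J.mem_gradedPiece_weightOp_iff.1 hx b c i j hne
    refine hne (J.entry_eq_zero_of_lie_eq_zero h0 hi hi' hj hj' ?_)
    simp only [wt] at hdeg
    omega

theorem liePreimage_mem_gradedPiece {y : Module.End ℂ W} {d : ℤ}
    (hy : y ∈ gradedPiece J.weightOp d) : J.liePreimage y ∈ gradedPiece J.weightOp (d - 2) := by
  rw [mem_gradedPiece_weightOp_iff] at hy ⊢
  intro b c i j hne
  have hi : 0 ≤ i ∧ i < J.len b := by_contra fun h ↦ hne (J.entry_eq_zero_of_row h _ _ _)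
  have hj : 0 ≤ j ∧ j < J.len c := by_contra fun h ↦ hne (J.entry_eq_zero_of_col h _ _ _)
  rw [liePreimage, entry_ofEntries _ _ hi.1 hi.2 hj.1 hj.2] at hne
  split_ifs at hne
  · obtain ⟨r, -, hr⟩ := Finset.exists_ne_zero_of_sum_ne_zero hne
    have := hy _ _ _ _ hr
    simp only [wt] at this ⊢
    omega
  · obtain ⟨r, -, hr⟩ := Finset.exists_ne_zero_of_sum_ne_zero (neg_ne_zero.1 hne)
    have := hy _ _ _ _ hr
    simp only [wt] at this ⊢
    omega

theorem lie_liePreimage {y : Module.End ℂ W} {d : ℤ} (hd : 1 ≤ d)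
    (hy : y ∈ gradedPiece J.weightOp d) : ⁅f, J.liePreimage y⁆ = y := by
  have hx := J.liePreimage_mem_gradedPiece hy
  rw [mem_gradedPiece_weightOp_iff] at hx hy
  refine J.ext_entry fun b c i j hi hi' hj hj' ↦ ?_
  rw [J.entry_lie hi' hj]
  by_cases hdeg : 2 * (J.wt b i - J.wt c j) = d
  · rcases lt_or_ge j i with h | h
    · rw [J.entry_liePreimage_of_le _ (by omega) hj (by omega),
        J.entry_liePreimage_of_le _ hi' (by omega) (by omega), sub_add_cancel,
        J.diagSumDown_sub _ _ _ hi]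
    · have : (J.len b : ℤ) - J.len c < i - j := by simp only [wt] at hdeg; omega
      rw [J.entry_liePreimage_of_lt _ (by omega) hj' (by omega),
        J.entry_liePreimage_of_lt _ hi' (by omega) (by omega), add_sub_cancel_right, neg_sub_neg,
        J.diagSumUp_sub _ _ _ hi']
  · have hy0 : J.entry y b i c j = 0 := by_contra fun hne ↦ hdeg (hy _ _ _ _ hne)
    have hx₁ : J.entry (J.liePreimage y) b (i - 1) c j = 0 := by_contra fun hne ↦ by
      have := hx _ _ _ _ hne
      simp only [wt] at this hdeg
      omega
    have hx₂ : J.entry (J.liePreimage y) b i c (j + 1) = 0 := by_contra fun hne ↦ by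
      have := hx _ _ _ _ hne
      simp only [wt] at this hdeg
      omega
    rw [hy0, hx₁, hx₂, sub_zero]

theorem isGoodPair_weightOp : IsGoodPair J.weightOp f := by
  refine ⟨fun d hd x hx x' hx' hxx' ↦ ?_, fun d hd y hy ↦ ?_⟩
  · refine sub_eq_zero.1 (J.eq_zero_of_lie_eq_zero hd (sub_mem_gradedPiece hx hx') ?_)
    rw [Ring.lie_sub]
    exact sub_eq_zero.2 hxx'
  · refine ⟨J.liePreimage y, ?_, J.lie_liePreimage (by omega) hy⟩
    simpa using J.liePreimage_mem_gradedPiece hy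

end Complex

end JordanBasis

/-- Let `V = V₀ ⊕ V₁` be a finite-dimensional complex vector space
and let `e ∈ End(V)` be nilpotent with `e(V₀) ⊆ V₀` and `e(V₁) ⊆ V₁`.  Then there
exists `h ∈ End(V)` with `h(V₀) ⊆ V₀` and `h(V₁) ⊆ V₁`, `h` diagonalizable with all
eigenvalues even integers, `⁅h, e⁆ = 2 • e`, and such that the pair `(h, e)` is good.
In particular the grading determined by `h` is even.  (Every nilpotent even element
of `gl(m|n)` has a good even `ℤ`-grading.) -/
theorem exists_good_even_grading
    (V : Type*) [AddCommGroup V] [Module ℂ V] [FiniteDimensional ℂ V]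
    (V₀ V₁ : Submodule ℂ V) (hcompl : IsCompl V₀ V₁)
    (e : Module.End ℂ V) (he_nil : IsNilpotent e)
    (hE0 : ∀ x ∈ V₀, e x ∈ V₀) (hE1 : ∀ x ∈ V₁, e x ∈ V₁) :
    ∃ h : Module.End ℂ V,
      (∀ x ∈ V₀, h x ∈ V₀) ∧ (∀ x ∈ V₁, h x ∈ V₁) ∧
      (⨆ j : ℤ, Module.End.eigenspace h ((2 * j : ℤ) : ℂ)) = ⊤ ∧
      ⁅h, e⁆ = (2 : ℂ) • e ∧ IsGoodPair h e := by
  obtain ⟨J₀⟩ := JordanBasis.nonempty (Module.End.isNilpotent.restrict hE0 he_nil)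
  obtain ⟨J₁⟩ := JordanBasis.nonempty (Module.End.isNilpotent.restrict hE1 he_nil)
  let J := J₀.ofIsCompl J₁ hcompl
  exact ⟨J.weightOp, fun _ ↦ J.weightOp_mem J₀ Sum.inl (fun _ ↦ rfl) (fun _ ↦ rfl),
    fun _ ↦ J.weightOp_mem J₁ Sum.inr (fun _ ↦ rfl) (fun _ ↦ rfl), J.iSup_eigenspace_weightOp,
    J.lie_weightOp_self, J.isGoodPair_weightOp⟩
end
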